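/- arXiv:0708.2450 — 3 statements merged into one kernel-verified Lean document; each statement's English description precedes it below -/
import Mathlib

section
/- Let n ≥ 3 be an integer and ξ ∈ [0, 1/4]. Then for every y ≥ 1, (1/n) Q_{n,2}(y) − (4ξ/(n−1)) Q_{n,1}(y) + (2ξ/(n−2)) Q_{n,0}(y) ≤ (3n−4)/(2n(n−2)), where Q_{n,k}(y) = ((n+k−2)/y^{n+k−2}) ∫₁^y (x²−1)^{(n−3)/2} x^k dx. -/
theorem Q_combination_bound (n : ℕ) (hn : 3 ≤ n) (ξ : ℝ) (hξ : ξ ∈ Set.Icc (0:ℝ) (1/4))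
    (Q : ℕ → ℝ → ℝ)
    (hQ : ∀ (k : ℕ) (y : ℝ), Q k y = ((n + k - 2 : ℝ) / y ^ (n + k - 2)) *
      ∫ x in (1:ℝ)..y, (x ^ 2 - 1) ^ (((n : ℝ) - 3) / 2) * x ^ k) :
    ∀ y : ℝ, 1 ≤ y →
      (1 / n) * Q 2 y - (4 * ξ / (n - 1)) * Q 1 y + (2 * ξ / (n - 2)) * Q 0 y
        ≤ (3 * n - 4) / (2 * n * (n - 2)) := by
  intro y hy
  have hy0 : (0:ℝ) < y := by linarith
  have hn3 : (3:ℝ) ≤ (n:ℝ) := by exact_mod_cast hn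
  set c : ℝ := ((n:ℝ) - 3) / 2 with hcdef
  have hc0 : 0 ≤ c := div_nonneg (by linarith) (by norm_num)
  have hQbound : ∀ k : ℕ, 0 ≤ Q k y ∧ Q k y ≤ 1 := by
    intro k
    set m : ℕ := n + k - 2 with hm
    have hm1 : 1 ≤ m := by omega
    have hmcast : ((n:ℝ) + k - 2) = (m : ℝ) := by
      have h2 : 2 ≤ n + k := by omega
      rw [hm, Nat.cast_sub h2]; push_cast; ring
    have hmR : (0:ℝ) < (m:ℝ) := by exact_mod_cast hm1
    have hym : (0:ℝ) < y ^ m := pow_pos hy0 m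
    have hym1 : (1:ℝ) ≤ y ^ m := one_le_pow₀ hy
    -- nonnegativity of integrand
    have hfnn : ∀ x ∈ Set.Icc (1:ℝ) y, 0 ≤ (x ^ 2 - 1) ^ c * x ^ k := by
      intro x hx
      have hx1 : (1:ℝ) ≤ x := hx.1
      exact mul_nonneg (Real.rpow_nonneg (by nlinarith) c) (pow_nonneg (by linarith) k)
    -- continuity / integrability
    have hcont : ContinuousOn (fun x : ℝ => (x ^ 2 - 1) ^ c * x ^ k) (Set.uIcc 1 y) := by
      apply ContinuousOn.mul
      · exact ContinuousOn.rpow_const (by fun_prop) (fun x _ => Or.inr hc0)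
      · fun_prop
    have hintf : IntervalIntegrable (fun x : ℝ => (x ^ 2 - 1) ^ c * x ^ k)
        MeasureTheory.volume 1 y := hcont.intervalIntegrable
    have hintg : IntervalIntegrable (fun x : ℝ => x ^ (m - 1))
        MeasureTheory.volume 1 y := (continuous_pow _).intervalIntegrable _ _
    -- pointwise bound
    have hle : ∀ x ∈ Set.Icc (1:ℝ) y, (x ^ 2 - 1) ^ c * x ^ k ≤ x ^ (m - 1) := by
      intro x hx
      have hx1 : (1:ℝ) ≤ x := hx.1
      have hx0 : (0:ℝ) ≤ x := by linarith
      have h1 : (x ^ 2 - 1) ^ c ≤ (x ^ 2) ^ c :=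
        Real.rpow_le_rpow (by nlinarith) (by linarith) hc0
      have h2 : (x ^ 2 : ℝ) ^ c = x ^ (n - 3 : ℕ) := by
        have e1 : (x ^ 2 : ℝ) ^ c = x ^ (2 * c) := by
          rw [← Real.rpow_natCast x 2, ← Real.rpow_mul hx0]
          norm_num
        have e2 : 2 * c = ((n - 3 : ℕ) : ℝ) := by
          rw [hcdef, Nat.cast_sub hn]; push_cast; ring
        rw [e1, e2, Real.rpow_natCast]
      calc (x ^ 2 - 1) ^ c * x ^ k ≤ (x ^ 2) ^ c * x ^ k := by
            apply mul_le_mul_of_nonneg_right h1 (pow_nonneg hx0 k)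
        _ = x ^ (n - 3 : ℕ) * x ^ k := by rw [h2]
        _ = x ^ (m - 1) := by rw [← pow_add]; congr 1; omega
    have hI1 : 0 ≤ ∫ x in (1:ℝ)..y, (x ^ 2 - 1) ^ c * x ^ k :=
      intervalIntegral.integral_nonneg hy (fun x hx => hfnn x hx)
    have hI2 : (∫ x in (1:ℝ)..y, (x ^ 2 - 1) ^ c * x ^ k) ≤ ∫ x in (1:ℝ)..y, x ^ (m - 1) :=
      intervalIntegral.integral_mono_on hy hintf hintg hle
    have hIg : (∫ x in (1:ℝ)..y, x ^ (m - 1)) = (y ^ m - 1) / (m : ℝ) := by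
      rw [integral_pow]
      have : m - 1 + 1 = m := by omega
      rw [this]
      have h2 : ((m - 1 : ℕ) : ℝ) + 1 = (m : ℝ) := by
        rw [Nat.cast_sub hm1]; push_cast; ring
      rw [h2, one_pow]
    have hcoef : 0 ≤ (m : ℝ) / y ^ m := div_nonneg hmR.le hym.le
    constructor
    · rw [hQ k y, hmcast]
      exact mul_nonneg hcoef hI1
    · rw [hQ k y, hmcast]
      calc ((m:ℝ) / y ^ m) * ∫ x in (1:ℝ)..y, (x ^ 2 - 1) ^ c * x ^ k
          ≤ ((m:ℝ) / y ^ m) * ((y ^ m - 1) / (m : ℝ)) := by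
            apply mul_le_mul_of_nonneg_left _ hcoef
            rw [← hIg]; exact hI2
        _ = (y ^ m - 1) / y ^ m := by field_simp
        _ ≤ 1 := by rw [div_le_one hym]; linarith
  obtain ⟨hA0, hA1⟩ := hQbound 2
  obtain ⟨hB0, hB1⟩ := hQbound 1
  obtain ⟨hC0, hC1⟩ := hQbound 0
  obtain ⟨hξ0, hξ1⟩ := hξ
  have hNpos : (0:ℝ) < (n:ℝ) := by linarith
  have hN1 : (0:ℝ) < (n:ℝ) - 1 := by linarith
  have hN2 : (0:ℝ) < (n:ℝ) - 2 := by linarith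
  have h1 : (1 / (n:ℝ)) * Q 2 y ≤ 1 / (n:ℝ) := by
    nlinarith [one_div_pos.mpr hNpos]
  have h2 : (0:ℝ) ≤ (4 * ξ / ((n:ℝ) - 1)) * Q 1 y :=
    mul_nonneg (div_nonneg (by linarith) hN1.le) hB0
  have h3 : (2 * ξ / ((n:ℝ) - 2)) * Q 0 y ≤ (1/2) / ((n:ℝ) - 2) := by
    have hc' : 0 ≤ 2 * ξ / ((n:ℝ) - 2) := div_nonneg (by linarith) hN2.le
    calc (2 * ξ / ((n:ℝ) - 2)) * Q 0 y ≤ (2 * ξ / ((n:ℝ) - 2)) * 1 :=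
          mul_le_mul_of_nonneg_left hC1 hc'
      _ = 2 * ξ / ((n:ℝ) - 2) := mul_one _
      _ ≤ (1/2) / ((n:ℝ) - 2) := by gcongr; linarith
  have hkey : 1 / (n:ℝ) + (1/2) / ((n:ℝ) - 2) = (3 * (n:ℝ) - 4) / (2 * (n:ℝ) * ((n:ℝ) - 2)) := by
    field_simp
    ring
  linarith
end

section
/- Let n ≥ 4, m ≥ 0, and for β > 0 define the thermal energy density E(β) = β^{−n} B_{n,2}(βm) and the thermal Wick square W(β) = β^{2−n} B_{n,0}(βm), with B_{n,k} as above. Then β^n E(β) → B_{n,2}(0) > 0 and β^n W(β) = β² B_{n,0}(βm) → 0 as β → 0⁺. Consequently, there are no constants c, c' ≥ 0 with E(β) ≤ c + c'(Q_A + W(β)·Q_B) for all β > 0, for any fixed constants Q_A, Q_B ≥ 0. -/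
/-!
After the substitution `α = βm`, `βⁿ E(β) = B_{n,2}(βm)` and `βⁿ W(β) = β² B_{n,0}(βm)`, so
everything rests on the right-continuity of `α ↦ B_{n,k}(α)` at `0`. On `z > α ≥ 0` the integrand
is dominated, uniformly in `α`, by `z^{n+k-4} e^{-z/2}` (use `(z² - α²)^s ≤ z^{2s}` and
`e^z - 1 ≥ z e^{z/2}`), which is integrable near `0` because `n ≥ 4`; dominated convergence gives
the limit. The limit `B_{n,2}(0)` is the integral of a positive function, hence positive. Finally,
multiplying a bound `E ≤ c + c'(Q_A + W Q_B)` by `βⁿ` and letting `β → 0⁺` would give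
`B_{n,2}(0) ≤ 0`.
-/

open MeasureTheory Real Filter Set Topology

lemma Real.mul_exp_half_le_exp_sub_one {z : ℝ} (hz : 0 ≤ z) : z * exp (z / 2) ≤ exp z - 1 := by
  have hsinh : z ≤ exp (z / 2) - exp (-(z / 2)) := by
    have h := Real.self_le_sinh_iff.mpr (by linarith : (0 : ℝ) ≤ z / 2)
    rw [Real.sinh_eq] at h
    linarith
  have hexp : exp z - 1 = exp (z / 2) * (exp (z / 2) - exp (-(z / 2))) := by
    rw [mul_sub, ← exp_add, ← exp_add, show z / 2 + z / 2 = z by ring,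
      show z / 2 + -(z / 2) = 0 by ring, exp_zero]
  rw [hexp]
  exact mul_le_mul_of_nonneg_right hsinh (exp_pos _).le |>.trans_eq (mul_comm _ _)

noncomputable section

namespace Thermal

/-- The integrand of `B_{n,k}(α)`, with `s = (n - 3) / 2`. -/
def integrand (s : ℝ) (k : ℕ) (α z : ℝ) : ℝ :=
  (z ^ 2 - α ^ 2) ^ s * z ^ k / (exp z - 1)

def majorant (s : ℝ) (k : ℕ) (z : ℝ) : ℝ :=
  z ^ (2 * s + k - 1) * exp (-(1 / 2) * z)

variable {s : ℝ} {k : ℕ}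

lemma integrand_pos {α z : ℝ} (hαz : |α| < z) : 0 < integrand s k α z := by
  have hz : 0 < z := (abs_nonneg α).trans_lt hαz
  have hsq : 0 < z ^ 2 - α ^ 2 := by
    rw [sub_pos, ← sq_abs α]
    exact pow_lt_pow_left₀ hαz (abs_nonneg α) two_ne_zero
  exact div_pos (mul_pos (rpow_pos_of_pos hsq s) (pow_pos hz k))
    (sub_pos.mpr (one_lt_exp_iff.mpr hz))

lemma measurable_integrand (hs : 0 ≤ s) (k : ℕ) (α : ℝ) : Measurable (integrand s k α) :=
  ((((continuous_rpow_const hs).comp (continuous_pow 2 |>.sub continuous_const)).mul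
    (continuous_pow k)).measurable).div (continuous_exp.sub continuous_const).measurable

lemma continuous_integrand_param (hs : 0 ≤ s) (k : ℕ) (z : ℝ) :
    Continuous fun α => integrand s k α z :=
  (((continuous_rpow_const hs).comp (continuous_const.sub (continuous_pow 2))).mul
    continuous_const).div_const _

lemma integrand_le_majorant (hs : 0 ≤ s) {α z : ℝ} (hαz : |α| < z) :
    integrand s k α z ≤ majorant s k z := by
  have hz : 0 < z := (abs_nonneg α).trans_lt hαz
  have hnum : (z ^ 2 - α ^ 2) ^ s ≤ z ^ (2 * s) := by
    rw [rpow_mul hz.le, rpow_two]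
    exact rpow_le_rpow (by nlinarith [sq_abs α, abs_nonneg α]) (sub_le_self _ (sq_nonneg α)) hs
  calc integrand s k α z ≤ z ^ (2 * s) * z ^ k / (z * exp (z / 2)) := by
        unfold integrand
        gcongr
        exact mul_exp_half_le_exp_sub_one hz.le
    _ = majorant s k z := by
        rw [majorant, rpow_sub hz, rpow_add hz, rpow_one, rpow_natCast,
          show -(1 / 2) * z = -(z / 2) by ring, exp_neg]
        field_simp

lemma integrableOn_majorant (hsk : 0 < 2 * s + k) : IntegrableOn (majorant s k) (Ioi 0) := by
  have := integrableOn_rpow_mul_exp_neg_mul_rpow (p := 1) (b := 1 / 2)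
    (s := 2 * s + k - 1) (by linarith) one_pos one_half_pos
  simp only [rpow_one] at this
  exact this

lemma integrableOn_integrand_zero (hs : 0 ≤ s) (hsk : 0 < 2 * s + k) :
    IntegrableOn (integrand s k 0) (Ioi 0) := by
  refine (integrableOn_majorant hsk).mono' (measurable_integrand hs k 0).aestronglyMeasurable ?_
  filter_upwards [self_mem_ae_restrict measurableSet_Ioi] with z (hz : 0 < z)
  rw [← abs_zero] at hz
  rw [norm_of_nonneg (integrand_pos hz).le]
  exact integrand_le_majorant hs hz

lemma setIntegral_integrand_zero_pos (hs : 0 ≤ s) (hsk : 0 < 2 * s + k) :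
    0 < ∫ z in Ioi 0, integrand s k 0 z := by
  have hpos : ∀ z ∈ Ioi (0 : ℝ), 0 < integrand s k 0 z := fun z (hz : 0 < z) =>
    integrand_pos (by rwa [abs_zero])
  have hnonneg : 0 ≤ᵐ[volume.restrict (Ioi 0)] integrand s k 0 :=
    (ae_restrict_iff' measurableSet_Ioi).mpr (.of_forall fun z hz => (hpos z hz).le)
  rw [setIntegral_pos_iff_support_of_nonneg_ae hnonneg (integrableOn_integrand_zero hs hsk)]
  have hsupport : Ioi (0 : ℝ) ⊆ Function.support (integrand s k 0) ∩ Ioi 0 :=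
    fun z hz => ⟨(hpos z hz).ne', hz⟩
  exact lt_of_lt_of_le (by simp) (measure_mono hsupport)

lemma tendsto_setIntegral_integrand (hs : 0 ≤ s) (hsk : 0 < 2 * s + k) :
    Tendsto (fun α => ∫ z in Ioi α, integrand s k α z) (𝓝[≥] 0)
      (𝓝 (∫ z in Ioi 0, integrand s k 0 z)) := by
  have hnonneg : ∀ᶠ α in 𝓝[≥] (0 : ℝ), 0 ≤ α := self_mem_nhdsWithin
  -- Moving the `α`-dependence of the domain into an indicator puts every integral on `Ioi 0`.
  have hindicator : ∀ α : ℝ, 0 ≤ α →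
      ∫ z in Ioi α, integrand s k α z = ∫ z in Ioi 0, (Ioi α).indicator (integrand s k α) z := by
    intro α hα
    rw [setIntegral_indicator measurableSet_Ioi, Ioi_inter_Ioi, max_eq_right hα]
  refine Tendsto.congr' (hnonneg.mono fun α hα => (hindicator α hα).symm) ?_
  refine tendsto_integral_filter_of_dominated_convergence (majorant s k)
    (.of_forall fun α =>
      ((measurable_integrand hs k α).indicator measurableSet_Ioi).aestronglyMeasurable)
    ?_ (integrableOn_majorant hsk) ?_
  · filter_upwards [hnonneg] with α hα
    filter_upwards [self_mem_ae_restrict measurableSet_Ioi] with z (hz : 0 < z)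
    by_cases hαz : α < z
    · rw [indicator_of_mem (mem_Ioi.mpr hαz)]
      rw [← abs_of_nonneg hα] at hαz
      rw [norm_of_nonneg (integrand_pos hαz).le]
      exact integrand_le_majorant hs hαz
    · rw [indicator_of_notMem (mt mem_Ioi.mp hαz), norm_zero]
      exact mul_nonneg (rpow_nonneg hz.le _) (exp_pos _).le
  · filter_upwards [self_mem_ae_restrict measurableSet_Ioi] with z (hz : 0 < z)
    have hlt : ∀ᶠ α in 𝓝[≥] (0 : ℝ), α < z := nhdsWithin_le_nhds (Iio_mem_nhds hz)
    refine Tendsto.congr' (hlt.mono fun α hα => (indicator_of_mem hα _).symm) ?_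
    exact (continuous_integrand_param hs k z).continuousWithinAt.tendsto

end Thermal

end

lemma not_forall_le_add_mul_of_tendsto_pow_mul {n : ℕ} (hn : n ≠ 0) {f g : ℝ → ℝ} {L : ℝ}
    (hf : Tendsto (fun β => β ^ n * f β) (𝓝[>] 0) (𝓝 L)) (hL : 0 < L)
    (hg : Tendsto (fun β => β ^ n * g β) (𝓝[>] 0) (𝓝 0)) (a b : ℝ) :
    ¬ ∀ β, 0 < β → f β ≤ a + b * g β := by
  intro hle
  have hpow : Tendsto (fun β : ℝ => β ^ n) (𝓝[>] 0) (𝓝 0) :=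
    ((continuous_pow n).tendsto' 0 0 (zero_pow hn)).mono_left nhdsWithin_le_nhds
  have hbound : Tendsto (fun β => a * β ^ n + b * (β ^ n * g β)) (𝓝[>] 0) (𝓝 0) := by
    simpa using (hpow.const_mul a).add (hg.const_mul b)
  have hscaled : ∀ᶠ β in 𝓝[>] (0 : ℝ), β ^ n * f β ≤ a * β ^ n + b * (β ^ n * g β) := by
    filter_upwards [self_mem_nhdsWithin] with β (hβ : 0 < β)
    calc β ^ n * f β ≤ β ^ n * (a + b * g β) := by gcongr; exact hle β hβ
      _ = a * β ^ n + b * (β ^ n * g β) := by ring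
  linarith [le_of_tendsto_of_tendsto hf hbound hscaled]

open Thermal in
theorem thermal_nontriviality (n : ℕ) (hn : 4 ≤ n) (m : ℝ) (hm : 0 ≤ m)
    (B : ℕ → ℝ → ℝ)
    (hB : ∀ (k : ℕ) (α : ℝ), B k α = ∫ z in Set.Ioi α,
        (z ^ 2 - α ^ 2) ^ (((n : ℝ) - 3) / 2) * z ^ k / (Real.exp z - 1))
    (E W : ℝ → ℝ)
    (hE : ∀ β : ℝ, E β = B 2 (β * m) / β ^ n)
    (hW : ∀ β : ℝ, W β = β ^ 2 * B 0 (β * m) / β ^ n) :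
    Tendsto (fun β : ℝ => β ^ n * E β) (nhdsWithin 0 (Set.Ioi 0)) (nhds (B 2 0)) ∧
    0 < B 2 0 ∧
    Tendsto (fun β : ℝ => β ^ n * W β) (nhdsWithin 0 (Set.Ioi 0)) (nhds 0) ∧
    ∀ QA QB : ℝ, 0 ≤ QA → 0 ≤ QB →
      ¬ ∃ c c' : ℝ, 0 ≤ c ∧ 0 ≤ c' ∧
        ∀ β : ℝ, 0 < β → E β ≤ c + c' * (QA + W β * QB) := by
  have hn' : (4 : ℝ) ≤ n := by exact_mod_cast hn
  have hs : (0 : ℝ) ≤ (n - 3) / 2 := by linarith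
  have hsk (k : ℕ) : (0 : ℝ) < 2 * ((n - 3) / 2) + k := by linarith [k.cast_nonneg (α := ℝ)]
  have hB' (k : ℕ) (α : ℝ) : B k α = ∫ z in Ioi α, integrand ((n - 3) / 2) k α z := hB k α
  have hmass : Tendsto (fun β => β * m) (𝓝[>] 0) (𝓝[≥] 0) :=
    tendsto_nhdsWithin_iff.mpr
      ⟨((continuous_mul_const m).tendsto' 0 0 (zero_mul m)).mono_left nhdsWithin_le_nhds,
        eventually_nhdsWithin_of_forall fun β (hβ : 0 < β) => mul_nonneg hβ.le hm⟩
  have hBlim (k : ℕ) : Tendsto (fun β => B k (β * m)) (𝓝[>] 0) (𝓝 (B k 0)) := by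
    simp only [hB']
    exact (tendsto_setIntegral_integrand hs (hsk k)).comp hmass
  have hEβ : Tendsto (fun β : ℝ => β ^ n * E β) (𝓝[>] 0) (𝓝 (B 2 0)) := by
    refine (hBlim 2).congr' (eventually_nhdsWithin_of_forall fun β (hβ : 0 < β) => ?_)
    simp only [hE]
    field_simp
  have hWβ : Tendsto (fun β : ℝ => β ^ n * W β) (𝓝[>] 0) (𝓝 0) := by
    have hsq : Tendsto (fun β : ℝ => β ^ 2) (𝓝[>] 0) (𝓝 0) :=
      ((continuous_pow 2).tendsto' 0 0 (zero_pow two_ne_zero)).mono_left nhdsWithin_le_nhds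
    refine (zero_mul (B 0 0) ▸ hsq.mul (hBlim 0)).congr'
      (eventually_nhdsWithin_of_forall fun β (hβ : 0 < β) => ?_)
    simp only [hW]
    field_simp
  have hpos : 0 < B 2 0 := hB' 2 0 ▸ setIntegral_integrand_zero_pos hs (hsk 2)
  refine ⟨hEβ, hpos, hWβ, fun QA QB _ _ ⟨c, c', _, _, hle⟩ => ?_⟩
  exact not_forall_le_add_mul_of_tendsto_pow_mul (by omega) hEβ hpos hWβ (c + c' * QA) (c' * QB)
    fun β hβ => (hle β hβ).trans_eq (by ring)
end

section
/- Let n ≥ 4 and m > 0. For f in the Schwartz space of ℝ with real values, define Q(f) = ∫₀^∞ dα ∫₀^∞ dk · (k^{n−2}/ω(k)) · ((1−2ξ)ω(k)² + 2ξα²) · |f̂(α + ω(k))|², where ω(k) = √(k² + m²) and ξ ∈ [0, 1/4]. Then Q(f) is finite and nonnegative. -/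
/-!
Write `ω = freq m k = √(k² + m²)` and `y = α + ω`, so that `α, k ≤ y` and `m ≤ ω`. Since
`(1 - 2ξ)ω² + 2ξα²` is a convex combination of `ω²` and `α²`, it lies between `0` and `y²`; hence
the weight `k^(n-2)/ω · ((1 - 2ξ)ω² + 2ξα²)` is nonnegative and at most `(1 + y)^(n+2)/m`. As
`(1 + α²)(1 + k²) ≤ (1 + y)⁴` and `f̂` is a Schwartz function, `(1 + y)^(n+6) |f̂ y|²` is bounded,
so the integrand is dominated by a multiple of `(1 + α²)⁻¹(1 + k²)⁻¹`, which is integrable on `ℝ²`.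
-/

open MeasureTheory Real FourierTransform SchwartzMap Set

noncomputable def freq (m k : ℝ) : ℝ := √(k ^ 2 + m ^ 2)

lemma freq_nonneg (m k : ℝ) : 0 ≤ freq m k := sqrt_nonneg _

lemma le_freq (m k : ℝ) : k ≤ freq m k :=
  le_sqrt_of_sq_le (le_add_of_nonneg_right (sq_nonneg m))

lemma mass_le_freq (m k : ℝ) : m ≤ freq m k :=
  le_sqrt_of_sq_le (le_add_of_nonneg_left (sq_nonneg k))

@[fun_prop]
lemma continuous_freq (m : ℝ) : Continuous (freq m) := by
  unfold freq; fun_prop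

section WeightedSq

variable {t a b : ℝ}

lemma weighted_sq_nonneg (ht : t ∈ Icc (0 : ℝ) 1) : 0 ≤ (1 - t) * a ^ 2 + t * b ^ 2 :=
  add_nonneg (mul_nonneg (sub_nonneg.2 ht.2) (sq_nonneg a)) (mul_nonneg ht.1 (sq_nonneg b))

lemma weighted_sq_le_sq_add (ht : t ∈ Icc (0 : ℝ) 1) (ha : 0 ≤ a) (hb : 0 ≤ b) :
    (1 - t) * a ^ 2 + t * b ^ 2 ≤ (a + b) ^ 2 := by
  nlinarith [mul_nonneg ht.1 (sq_nonneg a), mul_nonneg (sub_nonneg.2 ht.2) (sq_nonneg b),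
    mul_nonneg ha hb]

end WeightedSq

lemma one_add_sq_mul_one_add_sq_le {a b : ℝ} (ha : 0 ≤ a) (hb : 0 ≤ b) :
    (1 + a ^ 2) * (1 + b ^ 2) ≤ (1 + (a + b)) ^ 4 :=
  calc (1 + a ^ 2) * (1 + b ^ 2) ≤ (1 + (a + b)) ^ 2 * (1 + (a + b)) ^ 2 := by
        gcongr <;> nlinarith
    _ = (1 + (a + b)) ^ 4 := by ring

lemma integrable_inv_one_add_sq_mul_inv_one_add_sq :
    Integrable (fun p : ℝ × ℝ => (1 + p.1 ^ 2)⁻¹ * (1 + p.2 ^ 2)⁻¹) := by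
  rw [Measure.volume_eq_prod]
  exact integrable_inv_one_add_sq.mul_prod integrable_inv_one_add_sq

lemma SchwartzMap.exists_one_add_norm_pow_mul_norm_sq_le {E F : Type*} [NormedAddCommGroup E]
    [NormedSpace ℝ E] [NormedAddCommGroup F] [NormedSpace ℝ F] (f : 𝓢(E, F)) (N : ℕ) :
    ∃ C, ∀ x, (1 + ‖x‖) ^ N * ‖f x‖ ^ 2 ≤ C := by
  refine ⟨2 ^ N * (Finset.Iic (N, 0)).sup (fun m => SchwartzMap.seminorm ℝ m.1 m.2) f *
    SchwartzMap.seminorm ℝ 0 0 f, fun x => ?_⟩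
  have hN := one_add_le_sup_seminorm_apply (𝕜 := ℝ) (m := (N, 0)) le_rfl le_rfl f x
  rw [norm_iteratedFDeriv_zero] at hN
  rw [sq, ← mul_assoc]
  exact mul_le_mul hN (norm_le_seminorm ℝ f x) (norm_nonneg _) (by positivity)

noncomputable def qeiWeight (n : ℕ) (m ξ α k : ℝ) : ℝ :=
  k ^ (n - 2) / freq m k * ((1 - 2 * ξ) * freq m k ^ 2 + 2 * ξ * α ^ 2)

section QEIWeight

variable {n : ℕ} {m ξ α k : ℝ}

lemma two_mul_mem_Icc_zero_one (hξ : ξ ∈ Icc (0 : ℝ) (1 / 2)) : 2 * ξ ∈ Icc (0 : ℝ) 1 :=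
  ⟨by linarith [hξ.1], by linarith [hξ.2]⟩

lemma qeiWeight_nonneg (hξ : ξ ∈ Icc (0 : ℝ) (1 / 2)) (hk : 0 ≤ k) : 0 ≤ qeiWeight n m ξ α k :=
  mul_nonneg (div_nonneg (pow_nonneg hk _) (freq_nonneg m k))
    (weighted_sq_nonneg (two_mul_mem_Icc_zero_one hξ))

lemma qeiWeight_le (hm : 0 < m) (hξ : ξ ∈ Icc (0 : ℝ) (1 / 2)) (hα : 0 ≤ α) (hk : 0 ≤ k) :
    qeiWeight n m ξ α k ≤ (1 + (α + freq m k)) ^ (n + 2) / m := by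
  set y := 1 + (α + freq m k)
  have hky : k ≤ y := by linarith [le_freq m k]
  have hy : 0 ≤ y := hk.trans hky
  calc qeiWeight n m ξ α k
      ≤ y ^ (n - 2) / m * y ^ 2 := by
        unfold qeiWeight
        gcongr
        · exact weighted_sq_nonneg (two_mul_mem_Icc_zero_one hξ)
        · exact mass_le_freq m k
        · calc _ ≤ (freq m k + α) ^ 2 :=
                weighted_sq_le_sq_add (two_mul_mem_Icc_zero_one hξ) (freq_nonneg m k) hα
            _ ≤ y ^ 2 := by gcongr <;> linarith [freq_nonneg m k]
    _ = y ^ (n - 2 + 2) / m := by ring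
    _ ≤ y ^ (n + 2) / m := by
        gcongr
        · linarith [freq_nonneg m k]
        · omega

variable {E : Type*} [NormedAddCommGroup E] [NormedSpace ℝ E]

lemma exists_qeiWeight_mul_norm_sq_le (hm : 0 < m) (hξ : ξ ∈ Icc (0 : ℝ) (1 / 2))
    (F : 𝓢(ℝ, E)) : ∃ D, ∀ α k, 0 ≤ α → 0 ≤ k →
      qeiWeight n m ξ α k * ‖F (α + freq m k)‖ ^ 2 ≤ D * ((1 + α ^ 2)⁻¹ * (1 + k ^ 2)⁻¹) := by
  obtain ⟨C, hC⟩ := F.exists_one_add_norm_pow_mul_norm_sq_le (n + 6)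
  refine ⟨C / m, fun α k hα hk => ?_⟩
  set y := α + freq m k
  have hy : 0 ≤ y := add_nonneg hα (freq_nonneg m k)
  have hP : (1 + α ^ 2) * (1 + k ^ 2) ≤ (1 + y) ^ 4 :=
    (one_add_sq_mul_one_add_sq_le hα hk).trans (by gcongr; linarith [le_freq m k])
  rw [← mul_inv, ← div_eq_mul_inv, div_div, le_div_iff₀ (by positivity)]
  calc qeiWeight n m ξ α k * ‖F y‖ ^ 2 * (m * ((1 + α ^ 2) * (1 + k ^ 2)))
      ≤ (1 + y) ^ (n + 2) / m * ‖F y‖ ^ 2 * (m * (1 + y) ^ 4) := by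
        gcongr
        exact qeiWeight_le hm hξ hα hk
    _ = (1 + ‖y‖) ^ (n + 6) * ‖F y‖ ^ 2 := by
        rw [norm_of_nonneg hy]; field_simp; ring
    _ ≤ C := hC y

lemma integrableOn_qeiWeight_mul_norm_sq (hm : 0 < m) (hξ : ξ ∈ Icc (0 : ℝ) (1 / 2))
    (F : 𝓢(ℝ, E)) :
    IntegrableOn (fun p : ℝ × ℝ => qeiWeight n m ξ p.1 p.2 * ‖F (p.1 + freq m p.2)‖ ^ 2)
      (Ioi 0 ×ˢ Ioi 0) := by
  obtain ⟨D, hD⟩ := exists_qeiWeight_mul_norm_sq_le (n := n) hm hξ F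
  have hcont : Continuous fun p : ℝ × ℝ =>
      qeiWeight n m ξ p.1 p.2 * ‖F (p.1 + freq m p.2)‖ ^ 2 := by
    unfold qeiWeight
    have := F.continuous
    fun_prop (disch := exact fun p => (hm.trans_le (mass_le_freq m p.2)).ne')
  refine (integrable_inv_one_add_sq_mul_inv_one_add_sq.const_mul D).integrableOn.mono'
    hcont.aestronglyMeasurable.restrict ?_
  refine (ae_restrict_iff' (measurableSet_Ioi.prod measurableSet_Ioi)).2 (.of_forall ?_)
  rintro ⟨α, k⟩ ⟨hα, hk⟩
  rw [norm_of_nonneg (mul_nonneg (qeiWeight_nonneg hξ hk.le) (sq_nonneg _))]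
  exact hD α k hα.le hk.le

end QEIWeight

theorem QEI_state_independent_term_finite_general (n : ℕ) (m : ℝ) (hm : 0 < m)
    (ξ : ℝ) (hξ : ξ ∈ Set.Icc (0 : ℝ) (1 / 4)) (f : SchwartzMap ℝ ℝ) :
    IntegrableOn
      (fun p : ℝ × ℝ =>
        (p.2 ^ (n - 2) / Real.sqrt (p.2 ^ 2 + m ^ 2)) *
          ((1 - 2 * ξ) * (Real.sqrt (p.2 ^ 2 + m ^ 2)) ^ 2 + 2 * ξ * p.1 ^ 2) *
          ‖FourierTransform.fourier (fun x : ℝ => (f x : ℂ))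
              (p.1 + Real.sqrt (p.2 ^ 2 + m ^ 2))‖ ^ 2)
      (Set.Ioi (0 : ℝ) ×ˢ Set.Ioi (0 : ℝ)) ∧
    0 ≤ ∫ p in Set.Ioi (0 : ℝ) ×ˢ Set.Ioi (0 : ℝ),
        (p.2 ^ (n - 2) / Real.sqrt (p.2 ^ 2 + m ^ 2)) *
          ((1 - 2 * ξ) * (Real.sqrt (p.2 ^ 2 + m ^ 2)) ^ 2 + 2 * ξ * p.1 ^ 2) *
          ‖FourierTransform.fourier (fun x : ℝ => (f x : ℂ))
              (p.1 + Real.sqrt (p.2 ^ 2 + m ^ 2))‖ ^ 2 := by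
  have hξ' : ξ ∈ Icc (0 : ℝ) (1 / 2) := ⟨hξ.1, hξ.2.trans (by norm_num)⟩
  obtain ⟨F, hF⟩ : ∃ F : 𝓢(ℝ, ℂ), 𝓕 (fun x : ℝ => (f x : ℂ)) = F :=
    ⟨𝓕 (postcompCLM Complex.ofRealCLM f), (fourier_coe (postcompCLM Complex.ofRealCLM f)).symm⟩
  rw [hF]
  exact ⟨integrableOn_qeiWeight_mul_norm_sq hm hξ' F,
    setIntegral_nonneg (measurableSet_Ioi.prod measurableSet_Ioi) fun p hp =>
      mul_nonneg (qeiWeight_nonneg hξ' hp.2.le) (sq_nonneg _)⟩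

theorem QEI_state_independent_term_finite (n : ℕ) (hn : 4 ≤ n) (m : ℝ) (hm : 0 < m)
    (ξ : ℝ) (hξ : ξ ∈ Set.Icc (0 : ℝ) (1 / 4)) (f : SchwartzMap ℝ ℝ) :
    IntegrableOn
      (fun p : ℝ × ℝ =>
        (p.2 ^ (n - 2) / Real.sqrt (p.2 ^ 2 + m ^ 2)) *
          ((1 - 2 * ξ) * (Real.sqrt (p.2 ^ 2 + m ^ 2)) ^ 2 + 2 * ξ * p.1 ^ 2) *
          ‖FourierTransform.fourier (fun x : ℝ => (f x : ℂ))
              (p.1 + Real.sqrt (p.2 ^ 2 + m ^ 2))‖ ^ 2)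
      (Set.Ioi (0 : ℝ) ×ˢ Set.Ioi (0 : ℝ)) ∧
    0 ≤ ∫ p in Set.Ioi (0 : ℝ) ×ˢ Set.Ioi (0 : ℝ),
        (p.2 ^ (n - 2) / Real.sqrt (p.2 ^ 2 + m ^ 2)) *
          ((1 - 2 * ξ) * (Real.sqrt (p.2 ^ 2 + m ^ 2)) ^ 2 + 2 * ξ * p.1 ^ 2) *
          ‖FourierTransform.fourier (fun x : ℝ => (f x : ℂ))
              (p.1 + Real.sqrt (p.2 ^ 2 + m ^ 2))‖ ^ 2 :=
  QEI_state_independent_term_finite_general n m hm ξ hξ f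
end
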